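/- Let R(λ) = Σ_{i=0}^{m} λⁱAᵢ + C(A − λE)⁻¹B be invertible at λ ∈ ℂ. The backward error under perturbations of the polynomial coefficients only, η(λ, R) := min{‖(‖ΔA₀‖₂,…,‖ΔA_m‖₂)‖₂ : det(R(λ) + Σ λⁱΔAᵢ) = 0}, satisfies η(λ, R) ≤ σ_min(R(λ)) / ‖(1, λ, …, λᵐ)‖₂. -/

import Mathlib

open Matrix BigOperators

noncomputable def evnorm {n : Type*} [Fintype n] (v : n → ℂ) : ℝ :=
  Real.sqrt (∑ i, ‖v i‖ ^ 2)

noncomputable def frob {m n : Type*} [Fintype m] [Fintype n] (M : Matrix m n ℂ) : ℝ :=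
  Real.sqrt (∑ i, ∑ j, ‖M i j‖ ^ 2)

noncomputable def sigmaMax {m n : Type*} [Fintype m] [Fintype n] (T : Matrix m n ℂ) : ℝ :=
  sSup {x | ∃ v, evnorm v = 1 ∧ x = evnorm (T.mulVec v)}

noncomputable def sigmaMin {m n : Type*} [Fintype m] [Fintype n] (T : Matrix m n ℂ) : ℝ :=
  sInf {x | ∃ v, evnorm v = 1 ∧ x = evnorm (T.mulVec v)}

def hcat3 {i a b c : Type*} (A : Matrix i a ℂ) (B : Matrix i b ℂ) (C : Matrix i c ℂ) :
    Matrix i (a ⊕ b ⊕ c) ℂ :=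
  Matrix.of fun x j => match j with
    | Sum.inl j => A x j
    | Sum.inr (Sum.inl j) => B x j
    | Sum.inr (Sum.inr j) => C x j

def vcat3 {a b c j : Type*} (A : Matrix a j ℂ) (B : Matrix b j ℂ) (C : Matrix c j ℂ) :
    Matrix (a ⊕ b ⊕ c) j ℂ :=
  Matrix.of fun i y => match i with
    | Sum.inl i => A i y
    | Sum.inr (Sum.inl i) => B i y
    | Sum.inr (Sum.inr i) => C i y

noncomputable def Lnorm (m : ℕ) (μ : ℂ) : ℝ :=
  Real.sqrt (∑ i ∈ Finset.range (m + 1), ‖μ‖ ^ (2 * i))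


/-!
For a unit vector `x` and weights `w` (here `wᵢ = λⁱ`), the rank-one matrices
`ΔAᵢ = -(conj wᵢ / ‖w‖²) (R x) x*` satisfy `∑ wᵢ ΔAᵢ = -(R x) x*`, so `R + ∑ wᵢ ΔAᵢ`
annihilates `x`, while `‖ΔAᵢ‖₂ ≤ |wᵢ| ‖R x‖ / ‖w‖²`; hence the perturbation has size at most
`‖R x‖ / ‖w‖`. Taking the infimum over unit vectors `x` gives `σ_min(R) / ‖w‖`.
-/

section

variable {n : Type*} [Fintype n]

lemma evnorm_eq_norm_toLp (v : n → ℂ) :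
    evnorm v = ‖(WithLp.toLp 2 v : EuclideanSpace ℂ n)‖ := by
  rw [EuclideanSpace.norm_eq]; rfl

lemma evnorm_nonneg (v : n → ℂ) : 0 ≤ evnorm v :=
  Real.sqrt_nonneg _

lemma evnorm_pos {v : n → ℂ} (hv : v ≠ 0) : 0 < evnorm v := by
  rw [evnorm_eq_norm_toLp, norm_pos_iff]
  exact fun h => hv (congrArg WithLp.ofLp h)

lemma evnorm_sq (v : n → ℂ) : evnorm v ^ 2 = ∑ i, ‖v i‖ ^ 2 :=
  Real.sq_sqrt (by positivity)

lemma evnorm_smul (a : ℂ) (v : n → ℂ) : evnorm (a • v) = ‖a‖ * evnorm v := by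
  simp only [evnorm_eq_norm_toLp, WithLp.toLp_smul, norm_smul]

lemma evnorm_single [DecidableEq n] (i : n) : evnorm (Pi.single i 1 : n → ℂ) = 1 := by
  rw [evnorm_eq_norm_toLp, PiLp.toLp_single, PiLp.norm_single, norm_one]

lemma norm_star_dotProduct_le (x v : n → ℂ) : ‖star x ⬝ᵥ v‖ ≤ evnorm x * evnorm v := by
  rw [dotProduct_comm, evnorm_eq_norm_toLp, evnorm_eq_norm_toLp,
    ← EuclideanSpace.inner_toLp_toLp]
  exact norm_inner_le_norm (𝕜 := ℂ) _ _

lemma star_dotProduct_self (x : n → ℂ) : star x ⬝ᵥ x = (evnorm x ^ 2 : ℝ) := by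
  rw [dotProduct_comm, evnorm_eq_norm_toLp, ← EuclideanSpace.inner_toLp_toLp]
  exact_mod_cast inner_self_eq_norm_sq_to_K (𝕜 := ℂ) (WithLp.toLp 2 x)

variable {k : Type*} [Fintype k]

lemma sigmaMax_nonneg (T : Matrix k n ℂ) : 0 ≤ sigmaMax T :=
  Real.sSup_nonneg (by rintro _ ⟨v, -, rfl⟩; exact evnorm_nonneg _)

lemma sigmaMax_le (T : Matrix k n ℂ) {b : ℝ} (hb : 0 ≤ b)
    (h : ∀ v, evnorm v = 1 → evnorm (T *ᵥ v) ≤ b) : sigmaMax T ≤ b :=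
  Real.sSup_le (by rintro _ ⟨v, hv, rfl⟩; exact h v hv) hb

lemma sigmaMax_vecMulVec_star_le (u : k → ℂ) (x : n → ℂ) :
    sigmaMax (vecMulVec u (star x)) ≤ evnorm u * evnorm x := by
  refine sigmaMax_le _ (mul_nonneg (evnorm_nonneg u) (evnorm_nonneg x)) fun v hv => ?_
  rw [vecMulVec_mulVec, op_smul_eq_smul, evnorm_smul, mul_comm]
  have hdot := norm_star_dotProduct_le x v
  rw [hv, mul_one] at hdot
  exact mul_le_mul_of_nonneg_left hdot (evnorm_nonneg u)

lemma sigmaMin_nonneg (T : Matrix k n ℂ) : 0 ≤ sigmaMin T :=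
  Real.sInf_nonneg (by rintro _ ⟨v, -, rfl⟩; exact evnorm_nonneg _)

lemma le_sigmaMin [Nonempty n] (T : Matrix k n ℂ) {b : ℝ}
    (h : ∀ v, evnorm v = 1 → b ≤ evnorm (T *ᵥ v)) : b ≤ sigmaMin T := by
  classical
  obtain ⟨i⟩ := ‹Nonempty n›
  exact le_csInf ⟨_, Pi.single i 1, evnorm_single i, rfl⟩
    (by rintro _ ⟨v, hv, rfl⟩; exact h v hv)

end

section

variable {ι n : Type*} [Fintype ι] [Fintype n] [DecidableEq n]

def backwardErrors (w : ι → ℂ) (R : Matrix n n ℂ) : Set ℝ :=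
  {x | ∃ ΔA : ι → Matrix n n ℂ, (R + ∑ i, w i • ΔA i).det = 0 ∧
    x = Real.sqrt (∑ i, sigmaMax (ΔA i) ^ 2)}

lemma sInf_backwardErrors_le (w : ι → ℂ) (R : Matrix n n ℂ) (hw : w ≠ 0)
    (x : n → ℂ) (hx : evnorm x = 1) :
    sInf (backwardErrors w R) ≤ evnorm (R *ᵥ x) / evnorm w := by
  set u := R *ᵥ x
  set N := vecMulVec u (star x)
  have hL : 0 < evnorm w := evnorm_pos hw
  let c : ι → ℂ := fun i => -(star w i / (evnorm w ^ 2 : ℝ))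
  have hsum : ∑ i, w i • c i • N = -N := by
    simp_rw [smul_smul, ← Finset.sum_smul]
    have hcoeff : ∑ i, w i * c i = -1 := by
      simp only [c, mul_neg, Finset.sum_neg_distrib, mul_div_assoc', ← Finset.sum_div]
      rw [← dotProduct, dotProduct_comm, star_dotProduct_self,
        div_self (by exact_mod_cast (pow_pos hL 2).ne')]
    rw [hcoeff, neg_one_smul]
  have hdet : (R + ∑ i, w i • c i • N).det = 0 := by
    refine exists_mulVec_eq_zero_iff.mp ⟨x, fun h => by simp [h, evnorm] at hx, ?_⟩
    rw [hsum, add_mulVec, neg_mulVec, vecMulVec_mulVec, op_smul_eq_smul,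
      star_dotProduct_self, hx]
    simp [u]
  have hbound : ∀ i, sigmaMax (c i • N) ≤ ‖w i‖ / evnorm w ^ 2 * evnorm u := by
    intro i
    have hrank := sigmaMax_vecMulVec_star_le (c i • u) x
    rwa [smul_vecMulVec, evnorm_smul, hx, mul_one, norm_neg, norm_div, Pi.star_apply,
      norm_star, Complex.norm_real, Real.norm_of_nonneg (by positivity)] at hrank
  have hsq : ∑ i, (‖w i‖ / evnorm w ^ 2 * evnorm u) ^ 2 = (evnorm u / evnorm w) ^ 2 := by
    simp_rw [mul_pow, div_pow, ← Finset.sum_mul, ← Finset.sum_div, ← evnorm_sq w]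
    field_simp
  calc sInf (backwardErrors w R)
      ≤ Real.sqrt (∑ i, sigmaMax (c i • N) ^ 2) :=
        csInf_le ⟨0, by rintro _ ⟨_, -, rfl⟩; positivity⟩ ⟨_, hdet, rfl⟩
    _ ≤ Real.sqrt ((evnorm u / evnorm w) ^ 2) := by
        rw [← hsq]
        gcongr with i
        · exact sigmaMax_nonneg _
        · exact hbound i
    _ = evnorm u / evnorm w := Real.sqrt_sq (div_nonneg (evnorm_nonneg u) hL.le)

lemma sInf_backwardErrors_le_sigmaMin_div (w : ι → ℂ) (R : Matrix n n ℂ) (hw : w ≠ 0) :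
    sInf (backwardErrors w R) ≤ sigmaMin R / evnorm w := by
  have hL : 0 < evnorm w := evnorm_pos hw
  cases isEmpty_or_nonempty n with
  | inl hn =>
    have hempty : backwardErrors w R = ∅ := by
      ext; simp [backwardErrors, det_isEmpty]
    rw [hempty, Real.sInf_empty]
    exact div_nonneg (sigmaMin_nonneg R) hL.le
  | inr hn =>
    rw [le_div_iff₀ hL]
    exact le_sigmaMin R fun v hv => (le_div_iff₀ hL).mp (sInf_backwardErrors_le w R hw v hv)

end

lemma Lnorm_eq_evnorm (m : ℕ) (μ : ℂ) :
    Lnorm m μ = evnorm fun i : Fin (m + 1) => μ ^ (i : ℕ) := by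
  rw [Lnorm, evnorm, ← Fin.sum_univ_eq_sum_range]
  simp_rw [norm_pow, ← pow_mul, mul_comm]

theorem stmt13_general {n m : ℕ} (μ : ℂ)
    (R : Matrix (Fin n) (Fin n) ℂ) :
    sInf {x | ∃ ΔA : Fin (m + 1) → Matrix (Fin n) (Fin n) ℂ,
        (R + ∑ i : Fin (m + 1), μ ^ (i : ℕ) • ΔA i).det = 0 ∧
        x = Real.sqrt (∑ i, sigmaMax (ΔA i) ^ 2)} ≤ sigmaMin R / Lnorm m μ := by
  rw [Lnorm_eq_evnorm]
  exact sInf_backwardErrors_le_sigmaMin_div _ R (Function.ne_iff.mpr ⟨0, by simp⟩)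

theorem stmt13 {n r m : ℕ} (μ : ℂ)
    (Amat : Fin (m + 1) → Matrix (Fin n) (Fin n) ℂ)
    (A E : Matrix (Fin r) (Fin r) ℂ) (B : Matrix (Fin r) (Fin n) ℂ)
    (C : Matrix (Fin n) (Fin r) ℂ)
    (hAE : IsUnit (A - μ • E))
    (R : Matrix (Fin n) (Fin n) ℂ)
    (hR : R = (∑ i : Fin (m + 1), μ ^ (i : ℕ) • Amat i) + C * ((A - μ • E)⁻¹ * B))
    (hRu : IsUnit R) :
    sInf {x | ∃ ΔA : Fin (m + 1) → Matrix (Fin n) (Fin n) ℂ,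
        (R + ∑ i : Fin (m + 1), μ ^ (i : ℕ) • ΔA i).det = 0 ∧
        x = Real.sqrt (∑ i, sigmaMax (ΔA i) ^ 2)} ≤ sigmaMin R / Lnorm m μ :=
  stmt13_general μ R
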